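/- arXiv:hep-th/0408126 — 2 statements merged into one kernel-verified Lean document; each statement's English description precedes it below -/
import Mathlib

section
/- Let n be a positive integer, let P, Q, R, S, E₀ be n×n real matrices, set M = Sᵀ·E₀ − Qᵀ and N = Pᵀ − Rᵀ·E₀, and assume that N is invertible and that the 2n×2n block matrix (Sᵀ Qᵀ; Rᵀ Pᵀ) is invertible. Set C = M·N⁻¹. Then the subspace of ℝⁿ × ℝⁿ given by { (vecMul η (Sᵀ + C·Rᵀ), vecMul η (Qᵀ + C·Pᵀ)) : η ∈ ℝⁿ } equals the subspace { (ξ, vecMul ξ E₀) : ξ ∈ ℝⁿ }, where vecMul denotes multiplication of a row vector by a matrix. (This expresses the invariance of the subspace ℰ⁺ = span{X_j + (E₀)_{jk} X̃^k} = span{U_j + (E₀ᵤ)_{jk} Ũ^k} under the Poisson–Lie T-plurality transformation with E₀ᵤ = M·N⁻¹.) -/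
open Matrix

/-!
Put `N = Pᵀ - Rᵀ E₀`, `M = Sᵀ E₀ - Qᵀ` and `A = Sᵀ + M N⁻¹ Rᵀ`. Substituting `Pᵀ = N + Rᵀ E₀`
shows `Qᵀ + M N⁻¹ Pᵀ = A E₀`, so the first subspace is `{(η A, η A E₀)}`. Multiplying the block
matrix `(Sᵀ Qᵀ; Rᵀ Pᵀ)` on the right by the unipotent `(1 -E₀; 0 1)` gives `(Sᵀ -M; Rᵀ N)`, whose
Schur complement with respect to `N` is `A`; hence `A` is invertible and `η ↦ η A` is onto.
-/

namespace Matrix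

variable {ι α : Type*} [Fintype ι] [DecidableEq ι] [CommRing α]

theorem add_mul_inv_mul_eq_mul {P Q R S E : Matrix ι ι α} (hN : IsUnit (P - R * E)) :
    Q + (S * E - Q) * (P - R * E)⁻¹ * P = (S + (S * E - Q) * (P - R * E)⁻¹ * R) * E := by
  set N := P - R * E with hN_def
  set M := S * E - Q with hM_def
  have hP : P = N + R * E := by rw [hN_def, sub_add_cancel]
  have hNN : N⁻¹ * N = 1 := nonsing_inv_mul N ((isUnit_iff_isUnit_det N).mp hN)
  rw [hP, Matrix.mul_add, Matrix.mul_assoc M N⁻¹ N, hNN, Matrix.mul_one, hM_def]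
  noncomm_ring

theorem isUnit_add_mul_inv_mul_of_isUnit_fromBlocks {P Q R S E : Matrix ι ι α}
    (hT : IsUnit (fromBlocks S Q R P)) (hN : IsUnit (P - R * E)) :
    IsUnit (S + (S * E - Q) * (P - R * E)⁻¹ * R) := by
  have hU : IsUnit (fromBlocks 1 (-E) 0 1 : Matrix (ι ⊕ ι) (ι ⊕ ι) α) := by
    simp [isUnit_iff_isUnit_det]
  have hfac : fromBlocks S Q R P * fromBlocks 1 (-E) 0 1 =
      fromBlocks S (-(S * E - Q)) R (P - R * E) := by
    simp only [fromBlocks_multiply]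
    congr 1 <;> noncomm_ring
  have hSchur := hT.mul hU
  rw [hfac] at hSchur
  have : Invertible (P - R * E) := hN.invertible
  rw [isUnit_fromBlocks_iff_of_invertible₂₂, invOf_eq_nonsing_inv] at hSchur
  simpa only [Matrix.neg_mul, sub_neg_eq_add] using hSchur

theorem setOf_vecMul_pair_eq_of_isUnit {A E : Matrix ι ι α} (hA : IsUnit A) :
    {x : (ι → α) × (ι → α) | ∃ η, x = (η ᵥ* A, η ᵥ* (A * E))} =
      {x | ∃ ξ, x = (ξ, ξ ᵥ* E)} := by
  have hAA : A⁻¹ * A = 1 := nonsing_inv_mul A ((isUnit_iff_isUnit_det A).mp hA)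
  ext x
  constructor
  · rintro ⟨η, rfl⟩
    exact ⟨η ᵥ* A, by rw [vecMul_vecMul]⟩
  · rintro ⟨ξ, rfl⟩
    refine ⟨ξ ᵥ* A⁻¹, ?_⟩
    rw [vecMul_vecMul, vecMul_vecMul, ← Matrix.mul_assoc, hAA, vecMul_one, Matrix.one_mul]

end Matrix

theorem Eplus_invariance_general (n : ℕ)
    (P Q R S E₀ : Matrix (Fin n) (Fin n) ℝ)
    (hN : IsUnit (Pᵀ - Rᵀ * E₀))
    (hT : IsUnit (Matrix.fromBlocks Sᵀ Qᵀ Rᵀ Pᵀ)) :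
    {x : (Fin n → ℝ) × (Fin n → ℝ) |
        ∃ η : Fin n → ℝ,
          x = (Matrix.vecMul η (Sᵀ + (Sᵀ * E₀ - Qᵀ) * (Pᵀ - Rᵀ * E₀)⁻¹ * Rᵀ),
               Matrix.vecMul η (Qᵀ + (Sᵀ * E₀ - Qᵀ) * (Pᵀ - Rᵀ * E₀)⁻¹ * Pᵀ))} =
      {x : (Fin n → ℝ) × (Fin n → ℝ) |
        ∃ ξ : Fin n → ℝ, x = (ξ, Matrix.vecMul ξ E₀)} := by
  rw [add_mul_inv_mul_eq_mul hN]
  exact setOf_vecMul_pair_eq_of_isUnit (isUnit_add_mul_inv_mul_of_isUnit_fromBlocks hT hN)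

/-- Invariance of the subspace `ℰ⁺` under the Poisson–Lie T-plurality transformation:
with `M = Sᵀ·E₀ − Qᵀ`, `N = Pᵀ − Rᵀ·E₀` invertible, `C = M·N⁻¹`, and the block matrix
`(Sᵀ Qᵀ; Rᵀ Pᵀ)` invertible, the subspace
`{ (η·(Sᵀ + C·Rᵀ), η·(Qᵀ + C·Pᵀ)) : η ∈ ℝⁿ }` equals `{ (ξ, ξ·E₀) : ξ ∈ ℝⁿ }`. -/
theorem Eplus_invariance (n : ℕ) (hn : 0 < n)
    (P Q R S E₀ : Matrix (Fin n) (Fin n) ℝ)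
    (hN : IsUnit (Pᵀ - Rᵀ * E₀))
    (hT : IsUnit (Matrix.fromBlocks Sᵀ Qᵀ Rᵀ Pᵀ)) :
    {x : (Fin n → ℝ) × (Fin n → ℝ) |
        ∃ η : Fin n → ℝ,
          x = (Matrix.vecMul η (Sᵀ + (Sᵀ * E₀ - Qᵀ) * (Pᵀ - Rᵀ * E₀)⁻¹ * Rᵀ),
               Matrix.vecMul η (Qᵀ + (Sᵀ * E₀ - Qᵀ) * (Pᵀ - Rᵀ * E₀)⁻¹ * Pᵀ))} =
      {x : (Fin n → ℝ) × (Fin n → ℝ) |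
        ∃ ξ : Fin n → ℝ, x = (ξ, Matrix.vecMul ξ E₀)} :=
  Eplus_invariance_general n P Q R S E₀ hN hT
end

section
/- Let p, u, v, w, q, g, z, r be real numbers with q·r = g². Define F : ℝ³ → Matrix 3 3 ℝ by F(y) = [[p, u·e^{−y₁}, v·e^{−y₁}], [w·e^{−y₁}, q·e^{−2y₁}, g·e^{−2y₁}], [z·e^{−y₁}, g·e^{−2y₁}, r·e^{−2y₁}]], and let G(y) = (F(y) + F(y)ᵀ)/2 be its symmetric part. Then G(y) is invertible for every y ∈ ℝ³ if and only if both of the following hold: if r ≠ 0 then g·(v+z) ≠ r·(u+w), and if r = 0 then q·(v+z) ≠ 0. -/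
open Real Matrix

/-- The tensor `F` of the sigma model on the Manin triple `(5|1)`. -/
noncomputable def F51 (p u v w q g z r : ℝ) (y : Fin 3 → ℝ) : Matrix (Fin 3) (Fin 3) ℝ :=
  !![p,                  u * exp (-(y 0)),       v * exp (-(y 0));
     w * exp (-(y 0)),   q * exp (-(2 * y 0)),   g * exp (-(2 * y 0));
     z * exp (-(y 0)),   g * exp (-(2 * y 0)),   r * exp (-(2 * y 0))]

lemma metric51_det (p u v w q g z r : ℝ) (hqr : q * r = g ^ 2) (y : Fin 3 → ℝ) :
    ((1 / 2 : ℝ) • (F51 p u v w q g z r y + (F51 p u v w q g z r y)ᵀ)).det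
      = - exp (-(y 0))^4 * ((r*(u+w)^2 - 2*g*(u+w)*(v+z) + q*(v+z)^2)/4) := by
  have hT : (F51 p u v w q g z r y)ᵀ = F51 p w z u q g v r y := by
    ext i j; fin_cases i <;> fin_cases j <;> rfl
  rw [hT]
  have h2 : exp (-(2 * y 0)) = exp (-(y 0)) * exp (-(y 0)) := by
    rw [← Real.exp_add]; ring_nf
  rw [Matrix.det_fin_three]
  simp only [Matrix.smul_apply, Matrix.add_apply, F51, h2, Matrix.cons_val', Matrix.cons_val_zero,
    Matrix.cons_val_one, Matrix.head_cons, Matrix.empty_val', Matrix.cons_val_fin_one,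
    Matrix.cons_val_two, Matrix.tail_cons, Matrix.of_apply, smul_eq_mul, Matrix.vecHead]
  linear_combination p * exp (-(y 0)) ^ 4 * hqr

/-- The metric of the `(5|1)` sigma model (with `q·r = g²`) is invertible everywhere
iff `g·(v+z) ≠ r·(u+w)` when `r ≠ 0`, and `q·(v+z) ≠ 0` when `r = 0`. -/
theorem metric51_invertible_iff (p u v w q g z r : ℝ) (hqr : q * r = g ^ 2) :
    (∀ y : Fin 3 → ℝ,
        IsUnit ((1 / 2 : ℝ) • (F51 p u v w q g z r y + (F51 p u v w q g z r y)ᵀ))) ↔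
      ((r ≠ 0 → g * (v + z) ≠ r * (u + w)) ∧ (r = 0 → q * (v + z) ≠ 0)) := by
  set D : ℝ := r*(u+w)^2 - 2*g*(u+w)*(v+z) + q*(v+z)^2 with hD
  have key : (∀ y : Fin 3 → ℝ,
      IsUnit ((1 / 2 : ℝ) • (F51 p u v w q g z r y + (F51 p u v w q g z r y)ᵀ))) ↔ D ≠ 0 := by
    constructor
    · intro h
      have := (Matrix.isUnit_iff_isUnit_det _).1 (h 0)
      rw [metric51_det p u v w q g z r hqr, isUnit_iff_ne_zero] at this
      intro hD0
      apply this
      rw [← hD, hD0]; ring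
    · intro hD0 y
      rw [Matrix.isUnit_iff_isUnit_det, metric51_det p u v w q g z r hqr,
        isUnit_iff_ne_zero]
      have he : exp (-(y 0)) ≠ 0 := (Real.exp_pos _).ne'
      rw [← hD]
      exact mul_ne_zero (neg_ne_zero.2 (pow_ne_zero _ he)) (div_ne_zero hD0 (by norm_num))
  rw [key]
  constructor
  · intro hD0
    constructor
    · intro hr hgr
      apply hD0
      have : r * D = (r*(u+w) - g*(v+z))^2 := by
        rw [hD]; linear_combination (v+z)^2 * hqr
      have h0 : r*(u+w) - g*(v+z) = 0 := by linarith
      have : r * D = 0 := by rw [this, h0]; ring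
      rcases mul_eq_zero.1 this with h | h
      · exact absurd h hr
      · exact h
    · intro hr hq
      apply hD0
      have hg : g = 0 := by
        have : g ^ 2 = 0 := by rw [← hqr, hr]; ring
        exact pow_eq_zero_iff (by norm_num) |>.1 this
      rcases mul_eq_zero.1 hq with h | h
      · rw [hD, hr, hg, h]; ring
      · rw [hD, hr, hg, h]; ring
  · rintro ⟨h1, h2⟩ hD0
    by_cases hr : r = 0
    · have hg : g = 0 := by
        have : g ^ 2 = 0 := by rw [← hqr, hr]; ring
        exact pow_eq_zero_iff (by norm_num) |>.1 this
      apply h2 hr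
      have : q * (v+z)^2 = 0 := by rw [← hD0, hD, hr, hg]; ring
      rcases mul_eq_zero.1 this with h | h
      · rw [h]; ring
      · rw [pow_eq_zero_iff (by norm_num : (2:ℕ) ≠ 0) |>.1 h]; ring
    · apply h1 hr
      have hsq : (r*(u+w) - g*(v+z))^2 = 0 := by
        rw [show (r*(u+w) - g*(v+z))^2 = r * D by rw [hD]; linear_combination -(v+z)^2 * hqr,
          hD0]; ring
      have := pow_eq_zero_iff (by norm_num : (2:ℕ) ≠ 0) |>.1 hsq
      linarith
end
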